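/- For every prime r ≥ 7, the Laurent polynomial a⁵ + 3a³ + 2a − 2a⁻¹ − 3a⁻³ − a⁻⁵ does not lie in the ideal of ℤ[a^{±1}] generated by r and (a + a⁻¹)^{r−1}. -/
import Mathlib


open LaurentPolynomial

/-- The Laurent polynomial `a⁵ + 3a³ + 2a − 2a⁻¹ − 3a⁻³ − a⁻⁵`. -/
noncomputable def w1048 : LaurentPolynomial ℤ :=
  T 5 + 3 * T 3 + 2 * T 1 - 2 * T (-1) - 3 * T (-3) - T (-5)

open Polynomial

theorem stmt_9 (r : ℕ) (hr : r.Prime) (hr7 : 7 ≤ r) :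
    w1048 ∉ Ideal.span ({(r : LaurentPolynomial ℤ), (T 1 + T (-1)) ^ (r - 1)} :
      Set (LaurentPolynomial ℤ)) := by
  intro hmem
  haveI : Fact r.Prime := ⟨hr⟩
  rw [Ideal.mem_span_pair] at hmem
  obtain ⟨a, b, hab⟩ := hmem
  obtain ⟨n, A, hA⟩ := exists_T_pow a
  obtain ⟨m, B, hB⟩ := exists_T_pow b
  -- W is w1048 * T 5 as an honest polynomial
  set W : ℤ[X] := X ^ 10 + 3 * X ^ 8 + 2 * X ^ 6 - 2 * X ^ 4 - 3 * X ^ 2 - 1 with hWdef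
  have hW : toLaurent W = w1048 * T 5 := by
    simp only [hWdef, w1048, map_add, map_sub, map_mul, map_pow, map_ofNat,
      Polynomial.toLaurent_X, Polynomial.toLaurent_one, sub_mul, add_mul, T_pow, mul_one]
    simp only [← T_add]
    norm_num
  have hG : toLaurent (X ^ 2 + 1 : ℤ[X]) = (T 1 + T (-1)) * T 1 := by
    simp only [map_add, map_pow, Polynomial.toLaurent_X, Polynomial.toLaurent_one, add_mul,
      T_pow, mul_one, ← T_add]
    norm_num
  -- the key polynomial identity over ℤ
  have key : W * X ^ ((r - 1) + m + n) =
      (r : ℤ[X]) * A * X ^ ((r - 1) + m + 5)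
        + B * (X ^ 2 + 1) ^ (r - 1) * X ^ (n + 5) := by
    apply toLaurent_injective
    simp only [map_add, map_mul, map_pow, map_natCast, Polynomial.toLaurent_X, T_pow, mul_one,
      hA, hB, hW, hG]
    calc w1048 * T 5 * T ((r - 1 : ℕ) + m + n : ℕ)
        = (a * (r : LaurentPolynomial ℤ) + b * (T 1 + T (-1)) ^ (r - 1)) *
            (T 5 * T ((r - 1 : ℕ) + m + n : ℕ)) := by rw [hab]; ring
      _ = _ := by
          push_cast
          simp only [mul_pow, T_pow, mul_one]
          simp only [T_add]
          ring
  -- move to the algebraic closure of ZMod r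
  set K := AlgebraicClosure (ZMod r)
  obtain ⟨i, hi⟩ : ∃ i : K, (i : K) ^ 2 = -1 := by
    obtain ⟨i, hi⟩ := IsAlgClosed.exists_root (X ^ 2 + 1 : K[X]) (by
      have : (X ^ 2 + 1 : K[X]).degree = 2 := by
        compute_degree!
      rw [this]; norm_num)
    exact ⟨i, by have := hi; simp [Polynomial.IsRoot, Polynomial.eval_add] at this; linear_combination this⟩
  have hchar : CharP K r := by infer_instance
  have h2 : (2 : K) ≠ 0 := by
    intro h
    have := (CharP.cast_eq_zero_iff K r 2).mp (by exact_mod_cast h)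
    have := Nat.le_of_dvd (by norm_num) this
    omega
  have hi0 : i ≠ 0 := by
    intro h; rw [h] at hi; simp at hi
  -- map the identity to K[X]
  let F : ℤ[X] →+* K[X] := Polynomial.mapRingHom (Int.castRingHom K)
  have hr0 : ((r : ℤ[X]).map (Int.castRingHom K)) = 0 := by
    simp [Polynomial.map_natCast, CharP.cast_eq_zero K r]
  have keyK : (W.map (Int.castRingHom K)) * X ^ ((r - 1) + m + n) =
      (B.map (Int.castRingHom K)) * (X ^ 2 + 1) ^ (r - 1) * X ^ (n + 5) := by
    have := congrArg (Polynomial.map (Int.castRingHom K)) key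
    simpa [Polynomial.map_mul, Polynomial.map_add, Polynomial.map_pow, hr0] using this
  -- factor things over K
  have hWfac : (W.map (Int.castRingHom K)) = (X ^ 2 - 1) * (X ^ 2 + 1) ^ 4 := by
    have : W = (X ^ 2 - 1) * (X ^ 2 + 1) ^ 4 := by rw [hWdef]; ring
    rw [this]
    simp [Polynomial.map_mul, Polynomial.map_pow, Polynomial.map_sub, Polynomial.map_add]
  have hfac : (X ^ 2 + 1 : K[X]) = (X + Polynomial.C i) * (X - Polynomial.C i) := by
    have : (X + Polynomial.C i) * (X - Polynomial.C i) = X ^ 2 - Polynomial.C (i ^ 2) := by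
      simp only [map_pow]; ring
    rw [this, hi]; simp
  -- root multiplicities at i
  set L : K[X] := (X ^ 2 - 1) * (X ^ 2 + 1) ^ 4 * X ^ ((r - 1) + m + n) with hL
  have hP1 : ((X ^ 2 - 1) * (X + Polynomial.C i) ^ 4 * X ^ ((r - 1) + m + n) : K[X]).eval i ≠ 0 := by
    simp only [Polynomial.eval_mul, Polynomial.eval_pow, Polynomial.eval_add,
      Polynomial.eval_sub, Polynomial.eval_X, Polynomial.eval_C, Polynomial.eval_one, hi]
    have h1 : (-1 : K) - 1 ≠ 0 := by intro h; exact h2 (by linear_combination -h)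
    have h2i : (i + i) ≠ 0 := by
      intro h
      have h' : (2 : K) * i = 0 := by linear_combination h
      rcases mul_eq_zero.mp h' with h'' | h''
      · exact h2 h''
      · exact hi0 h''
    exact mul_ne_zero (mul_ne_zero h1 (pow_ne_zero _ h2i)) (pow_ne_zero _ hi0)
  have hne1 : (X ^ 2 - 1 : K[X]) ≠ 0 := fun h => by
    simpa [Polynomial.coeff_one] using congrArg (fun p => Polynomial.coeff p 2) h
  have hne2 : (X ^ 2 + 1 : K[X]) ≠ 0 := fun h => by
    simpa [Polynomial.coeff_one] using congrArg (fun p => Polynomial.coeff p 2) h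
  have hLne : L ≠ 0 :=
    mul_ne_zero (mul_ne_zero hne1 (pow_ne_zero _ hne2)) (pow_ne_zero _ Polynomial.X_ne_zero)
  have hLrm : Polynomial.rootMultiplicity i L = 4 := by
    have hrw : L = ((X ^ 2 - 1) * (X + Polynomial.C i) ^ 4 * X ^ ((r - 1) + m + n)) *
        (X - Polynomial.C i) ^ 4 := by rw [hL, hfac]; ring
    rw [hrw, Polynomial.rootMultiplicity_mul_X_sub_C_pow
      (fun h => hP1 (by rw [h]; simp)),
      Polynomial.rootMultiplicity_eq_zero (fun h => hP1 h)]
  have hdvd : (X - Polynomial.C i) ^ (r - 1) ∣ L := by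
    refine ⟨Polynomial.map (Int.castRingHom K) B * (X + Polynomial.C i) ^ (r - 1) * X ^ (n + 5), ?_⟩
    rw [hL, ← hWfac, keyK, hfac, mul_pow]
    ring
  have hge : (r - 1 : ℕ) ≤ Polynomial.rootMultiplicity i L :=
    (Polynomial.le_rootMultiplicity_iff hLne).mpr hdvd
  rw [hLrm] at hge
  omega
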